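/- Let Q be a finitely generated group, A a ℤQ-module generated by a finite set 𝒜, χ: Q → ℝ a nonzero character, and r ≥ 0. If there is a matrix (λ_{a,a₁}) indexed by 𝒜 × 𝒜 with entries in ℤQ_χ satisfying a₁ = Σ_{a ∈ 𝒜} a·λ_{a,a₁} for every a₁ ∈ 𝒜 and v_χ(λ_{a,a₁}) > r for all pairs, then A is generated by 𝒜 as a module over the monoid ring ℤQ_χ. -/

import Mathlib

def fgOver {Q : Type*} [Group Q] (M : Set Q) (A : Type*) [AddCommGroup A]
    [Module (MonoidAlgebra ℤ Q) A] : Prop :=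
  ∃ S : Finset A, AddSubgroup.closure
    {x : A | ∃ s ∈ S, ∃ q ∈ M, x = (MonoidAlgebra.single q (1:ℤ) : MonoidAlgebra ℤ Q) • s} = ⊤

open Classical in
noncomputable def vchi {Q : Type*} (χ : Q → ℝ) (lam : MonoidAlgebra ℤ Q) : WithTop ℝ :=
  if h : lam = 0 then ⊤
  else ((lam.coeff.support.inf' (Finsupp.support_nonempty_iff.mpr (fun h' => h (MonoidAlgebra.ext (by rw [h']; rfl)))) χ : ℝ) : WithTop ℝ)

/-! Let `H` be the additive subgroup generated by the `q • a` with `χ q ≥ 0`, `a ∈ 𝒜`. All entries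
of `λ` are supported where `χ ≥ ε` for some `ε > r ≥ 0`, so multiplying `a₁ = ∑ a • λ_{a,a₁}` by `q`
writes `q • a₁` as an integral combination of elements `(q * q') • a` with `χ (q * q') ≥ χ q + ε`.
Induction on `⌈-χ q / ε⌉` puts every `q • a` in `H`, and since `𝒜` generates `A` over `ℤQ`,
`H = A`. -/

theorem vchi_le_of_mem_support {Q : Type*} {χ : Q → ℝ} {μ : MonoidAlgebra ℤ Q} {q : Q}
    (hq : q ∈ μ.coeff.support) : vchi χ μ ≤ χ q := by
  have hμ : μ ≠ 0 := by rintro rfl; simp at hq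
  rw [vchi, dif_neg hμ, WithTop.coe_le_coe]
  exact Finset.inf'_le χ hq

theorem WithTop.exists_coe_btwn_forall_le {ι α : Type*} [LinearOrder α] [DenselyOrdered α]
    [NoMaxOrder α] {s : Finset ι} {f : ι → WithTop α} {r : α}
    (h : ∀ i ∈ s, (r : WithTop α) < f i) :
    ∃ ε : α, r < ε ∧ ∀ i ∈ s, (ε : WithTop α) ≤ f i := by
  obtain ⟨ε, hrε, hε⟩ :=
    WithTop.lt_iff_exists_coe_btwn.mp ((Finset.lt_inf_iff (WithTop.coe_lt_top r)).mpr h)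
  exact ⟨ε, WithTop.coe_lt_coe.mp hrε, fun i hi => hε.le.trans (Finset.inf_le hi)⟩

section

variable {Q : Type*} [Group Q] {A : Type*} [AddCommGroup A] [Module (MonoidAlgebra ℤ Q) A]

open MonoidAlgebra

theorem MonoidAlgebra.smul_eq_sum_single_smul (μ : MonoidAlgebra ℤ Q) (a : A) :
    μ • a = ∑ q ∈ μ.coeff.support, μ.coeff q • (single q (1 : ℤ) • a) := by
  conv_lhs => rw [← sum_coeff_single μ]
  rw [Finsupp.sum, Finset.sum_smul]
  refine Finset.sum_congr rfl fun q _ => ?_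
  rw [← smul_assoc, smul_single', mul_one]

theorem MonoidAlgebra.single_smul_smul_eq_sum (q : Q) (μ : MonoidAlgebra ℤ Q) (a : A) :
    single q (1 : ℤ) • μ • a =
      ∑ q' ∈ μ.coeff.support, μ.coeff q' • (single (q * q') (1 : ℤ) • a) := by
  rw [smul_eq_sum_single_smul μ a, Finset.smul_sum]
  refine Finset.sum_congr rfl fun q' _ => ?_
  rw [smul_comm, ← mul_smul, single_mul_single, one_mul]

theorem AddSubgroup.smul_mem_of_forall_single_smul_mem {H : AddSubgroup A} {a : A}
    (h : ∀ q : Q, single q (1 : ℤ) • a ∈ H) (μ : MonoidAlgebra ℤ Q) : μ • a ∈ H := by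
  rw [smul_eq_sum_single_smul]
  exact H.sum_mem fun q _ => H.zsmul_mem (h q) _

theorem AddSubgroup.eq_top_of_forall_single_smul_mem {H : AddSubgroup A} {𝒜 : Finset A}
    (hgen : Submodule.span (MonoidAlgebra ℤ Q) (𝒜 : Set A) = ⊤)
    (h : ∀ a ∈ 𝒜, ∀ q : Q, single q (1 : ℤ) • a ∈ H) : H = ⊤ := by
  refine eq_top_iff.mpr fun x _ => ?_
  obtain ⟨f, -, rfl⟩ := Submodule.mem_span_finset.mp (hgen ▸ Submodule.mem_top : x ∈ _)
  exact H.sum_mem fun a ha => smul_mem_of_forall_single_smul_mem (h a ha) (f a)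

theorem forall_single_smul_mem_of_forall_nonneg {χ : Q → ℝ}
    (hχ : ∀ a b : Q, χ (a * b) = χ a + χ b) {𝒜 : Finset A} {lam : A → A → MonoidAlgebra ℤ Q} (heq : ∀ a₁ ∈ 𝒜, a₁ = ∑ a ∈ 𝒜, lam a a₁ • a)
    {ε : ℝ} (hε : 0 < ε) (hlam : ∀ a ∈ 𝒜, ∀ a₁ ∈ 𝒜, (ε : WithTop ℝ) ≤ vchi χ (lam a a₁))
    {H : AddSubgroup A} (hH : ∀ a ∈ 𝒜, ∀ q : Q, 0 ≤ χ q → single q (1 : ℤ) • a ∈ H) :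
    ∀ a ∈ 𝒜, ∀ q : Q, single q (1 : ℤ) • a ∈ H := by
  have mem_of_neg_mul_le : ∀ n : ℕ, ∀ q : Q, -(n * ε) ≤ χ q → ∀ a ∈ 𝒜, single q (1 : ℤ) • a ∈ H := by
    intro n
    induction n with
    | zero => exact fun q hq a ha => hH a ha q (by simpa using hq)
    | succ n ih =>
      intro q hq a₁ ha₁
      rw [heq a₁ ha₁, Finset.smul_sum]
      refine H.sum_mem fun a ha => ?_
      rw [single_smul_smul_eq_sum]
      refine H.sum_mem fun q' hq' => H.zsmul_mem (ih _ ?_ a ha) _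
      have hq' : ε ≤ χ q' :=
        WithTop.coe_le_coe.mp ((hlam a ha a₁ ha₁).trans (vchi_le_of_mem_support hq'))
      push_cast at hq
      rw [hχ]
      linarith
  intro a ha q
  obtain ⟨n, hn⟩ := exists_nat_ge (-χ q / ε)
  exact mem_of_neg_mul_le n q (by linarith [(div_le_iff₀ hε).mp hn]) a ha

end

theorem stmt11_general {Q : Type*} [Group Q]
    (A : Type*) [AddCommGroup A] [Module (MonoidAlgebra ℤ Q) A]
    (𝒜 : Finset A) (hgen : Submodule.span (MonoidAlgebra ℤ Q) (𝒜 : Set A) = ⊤)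
    (χ : Q → ℝ) (hhom : ∀ a b : Q, χ (a * b) = χ a + χ b)
    (r : ℝ) (hr : 0 ≤ r)
    (lam : A → A → MonoidAlgebra ℤ Q)
    (heq : ∀ a₁ ∈ 𝒜, a₁ = ∑ a ∈ 𝒜, lam a a₁ • a)
    (hval : ∀ a ∈ 𝒜, ∀ a₁ ∈ 𝒜, (r : WithTop ℝ) < vchi χ (lam a a₁)) :
    AddSubgroup.closure
      {x : A | ∃ s ∈ 𝒜, ∃ q : Q, 0 ≤ χ q ∧
        x = (MonoidAlgebra.single q (1:ℤ) : MonoidAlgebra ℤ Q) • s} = ⊤ := by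
  obtain ⟨ε, hrε, hε⟩ := WithTop.exists_coe_btwn_forall_le (s := 𝒜 ×ˢ 𝒜)
    (f := fun p => vchi χ (lam p.1 p.2)) fun p hp =>
      hval _ (Finset.mem_product.mp hp).1 _ (Finset.mem_product.mp hp).2
  refine AddSubgroup.eq_top_of_forall_single_smul_mem hgen
    (forall_single_smul_mem_of_forall_nonneg hhom heq (hr.trans_lt hrε)
      (fun a ha a₁ ha₁ => hε (a, a₁) (Finset.mem_product.mpr ⟨ha, ha₁⟩)) ?_)
  exact fun a ha q hq => AddSubgroup.subset_closure ⟨a, ha, q, hq, rfl⟩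

theorem stmt11 {Q : Type*} [Group Q] (hQ : Group.FG Q)
    (A : Type*) [AddCommGroup A] [Module (MonoidAlgebra ℤ Q) A]
    (𝒜 : Finset A) (hgen : Submodule.span (MonoidAlgebra ℤ Q) (𝒜 : Set A) = ⊤)
    (χ : Q → ℝ) (hhom : ∀ a b : Q, χ (a * b) = χ a + χ b) (hne : χ ≠ 0)
    (r : ℝ) (hr : 0 ≤ r)
    (lam : A → A → MonoidAlgebra ℤ Q)
    (hsupp : ∀ a ∈ 𝒜, ∀ a₁ ∈ 𝒜, ∀ q ∈ (lam a a₁).coeff.support, 0 ≤ χ q)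
    (heq : ∀ a₁ ∈ 𝒜, a₁ = ∑ a ∈ 𝒜, lam a a₁ • a)
    (hval : ∀ a ∈ 𝒜, ∀ a₁ ∈ 𝒜, (r : WithTop ℝ) < vchi χ (lam a a₁)) :
    AddSubgroup.closure
      {x : A | ∃ s ∈ 𝒜, ∃ q : Q, 0 ≤ χ q ∧
        x = (MonoidAlgebra.single q (1:ℤ) : MonoidAlgebra ℤ Q) • s} = ⊤ :=
  stmt11_general A 𝒜 hgen χ hhom r hr lam heq hval
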